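/- Fix n, m, k, d ∈ ℕ, a set Ω ⊆ {1,…,n}×{1,…,m}, matrices A ∈ ℝ^{n×m}, Y ∈ ℝ^{n×d}, and reals λ, γ > 0 and M > 0. Let U ∈ ℝ^{n×k}, V ∈ ℝ^{m×k}, and P ∈ ℝ^{n×n} satisfy: P is symmetric, P² = P, Tr(P) ≤ k, (I_n − P)U = 0, and ‖U Vᵀ‖_σ ≤ M. Then, setting X = U Vᵀ, there exist symmetric matrices W₁ ∈ ℝ^{n×n} and W₂ ∈ ℝ^{m×m} such that: (i) I_n − P and P are positive semidefinite and Tr(P) ≤ k; (ii) the block matrix [[M·P, X],[Xᵀ, M·I_m]] is positive semidefinite; (iii) the block matrix [[W₁, X],[Xᵀ, W₂]] is positive semidefinite; and (iv) (γ/2)(Tr(W₁)+Tr(W₂)) = γ‖X‖_* ≤ (γ/2)(‖U‖_F² + ‖V‖_F²). Consequently, ∑_{(i,j)∈Ω}(X_{ij}−A_{ij})² + λTr(Yᵀ(I_n−P)Y) + (γ/2)(Tr(W₁)+Tr(W₂)) ≤ ∑_{(i,j)∈Ω}((UVᵀ)_{ij}−A_{ij})² + λTr(Yᵀ(I_n−P)Y)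 + (γ/2)(‖U‖_F² + ‖V‖_F²). -/

import Mathlib

/-!
Take a singular value decomposition `X = ∑ sᵢ uᵢ bᵢᵀ`: the `bᵢ` form an orthonormal eigenbasis
of `XᵀX` with eigenvalues `sᵢ²`, and `uᵢ = sᵢ⁻¹ X bᵢ`. The moduli `W₁ = ∑ sᵢ uᵢuᵢᵀ = (XXᵀ)^{1/2}`
and `W₂ = ∑ sᵢ bᵢbᵢᵀ = (XᵀX)^{1/2}` both have trace `∑ sᵢ = ‖X‖_*`, and
`[[W₁, X], [Xᵀ, W₂]] = ∑ sᵢ (uᵢ, bᵢ)(uᵢ, bᵢ)ᵀ` is positive semidefinite.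
For `X = UVᵀ` one has `sᵢ = ⟪Uᵀuᵢ, Vᵀbᵢ⟫ ≤ (‖Uᵀuᵢ‖² + ‖Vᵀbᵢ‖²) / 2`; summing over `i` gives
`‖X‖_* ≤ (‖U‖_F² + ‖V‖_F²) / 2`, since `∑ bᵢbᵢᵀ = 1` and `∑ uᵢuᵢᵀ` is an orthogonal projection.
The block matrix `[[M P, X], [Xᵀ, M I]]` is positive semidefinite by completing the square:
`M (M‖Pa‖² + 2⟪Pa, Xb⟫ + M‖b‖²) = ‖M Pa + Xb‖² + (M²‖b‖² - ‖Xb‖²)`, using `PX = X`.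
-/

open Matrix

/-- The nuclear norm of a real matrix: the trace of the positive-semidefinite
square root of `Xᵀ * X` (i.e. the sum of the singular values of `X`). -/
noncomputable def nuclearNorm {n m : ℕ} (X : Matrix (Fin n) (Fin m) ℝ) : ℝ :=
  ((Matrix.posSemidef_conjTranspose_mul_self X).1.eigenvectorUnitary.1 *
    Matrix.diagonal (fun i => √((Matrix.posSemidef_conjTranspose_mul_self X).1.eigenvalues i)) *
    (star (Matrix.posSemidef_conjTranspose_mul_self X).1.eigenvectorUnitary :
      Matrix (Fin m) (Fin m) ℝ)).trace

/-- The spectral norm of a real matrix: its ℓ²→ℓ² operator norm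
(i.e. the largest singular value of `X`). -/
noncomputable def matSpectralNorm {n m : ℕ} (X : Matrix (Fin n) (Fin m) ℝ) : ℝ :=
  ‖LinearMap.toContinuousLinearMap (Matrix.toEuclideanLin X)‖

namespace Matrix

section Projection

variable {n : Type*} [Fintype n]

theorem posSemidef_of_transpose_eq_of_isIdempotentElem {P : Matrix n n ℝ} (hsym : Pᵀ = P)
    (hP : IsIdempotentElem P) : P.PosSemidef := by
  have h := posSemidef_conjTranspose_mul_self P
  rwa [conjTranspose_eq_transpose_of_trivial, hsym, hP.eq] at h

theorem trace_transpose_mul_mul_le [DecidableEq n] {k : Type*} [Fintype k] {P : Matrix n n ℝ}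
    (hsym : Pᵀ = P) (hP : IsIdempotentElem P) (U : Matrix n k ℝ) :
    (Uᵀ * P * U).trace ≤ (Uᵀ * U).trace := by
  have hQ : (1 - P)ᵀ * (1 - P) = 1 - P := by
    rw [transpose_sub, transpose_one, hsym, hP.one_sub.eq]
  have h := (posSemidef_conjTranspose_mul_self ((1 - P) * U)).trace_nonneg
  rw [conjTranspose_eq_transpose_of_trivial, transpose_mul, Matrix.mul_assoc,
    ← Matrix.mul_assoc (1 - P)ᵀ, hQ, Matrix.sub_mul, Matrix.one_mul, Matrix.mul_sub, trace_sub,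
    ← Matrix.mul_assoc] at h
  linarith

theorem isIdempotentElem_sum_vecMulVec {ι : Type*} [Fintype ι] {u : ι → n → ℝ}
    (horth : Pairwise fun i j => u i ⬝ᵥ u j = 0) (hnorm : ∀ i, u i = 0 ∨ u i ⬝ᵥ u i = 1) :
    IsIdempotentElem (∑ i, vecMulVec (u i) (u i)) := by
  rw [IsIdempotentElem, Finset.sum_mul_sum]
  refine Finset.sum_congr rfl fun i _ => ?_
  rw [Finset.sum_eq_single i (fun j _ hji => by
      rw [vecMulVec_mul_vecMulVec, horth hji.symm, zero_smul, vecMulVec_zero])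
    (by simp), vecMulVec_mul_vecMulVec]
  rcases hnorm i with h | h
  · simp [h]
  · rw [h, one_smul]

theorem posSemidef_fromBlocks_smul_of_mul_eq {m : Type*} [Fintype m] [DecidableEq n]
    {P : Matrix m m ℝ} {X : Matrix m n ℝ} {M : ℝ} (hsym : Pᵀ = P)
    (hP : IsIdempotentElem P) (hPX : P * X = X) (hM : 0 < M)
    (hXM : ∀ v, (X *ᵥ v) ⬝ᵥ (X *ᵥ v) ≤ M ^ 2 * (v ⬝ᵥ v)) :
    (fromBlocks (M • P) X Xᵀ (M • 1)).PosSemidef := by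
  refine .of_dotProduct_mulVec_nonneg (.fromBlocks ?_ (conjTranspose_eq_transpose_of_trivial X) ?_)
    fun x => ?_
  · simp [IsHermitian, conjTranspose_eq_transpose_of_trivial, hsym]
  · simp [IsHermitian]
  obtain ⟨a, b, rfl⟩ : ∃ a b, x = Sum.elim a b := ⟨_, _, (Sum.elim_comp_inl_inr x).symm⟩
  have hPadj : ∀ w, a ⬝ᵥ P *ᵥ w = (P *ᵥ a) ⬝ᵥ w := fun w => by
    rw [dotProduct_mulVec, ← mulVec_transpose, hsym]
  have hPa : a ⬝ᵥ P *ᵥ a = (P *ᵥ a) ⬝ᵥ (P *ᵥ a) := by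
    rw [← hPadj, mulVec_mulVec, hP.eq]
  have hXb : a ⬝ᵥ X *ᵥ b = (P *ᵥ a) ⬝ᵥ (X *ᵥ b) := by
    rw [← hPadj, mulVec_mulVec, hPX]
  have hXa : b ⬝ᵥ Xᵀ *ᵥ a = (P *ᵥ a) ⬝ᵥ (X *ᵥ b) := by
    rw [mulVec_transpose, dotProduct_comm, ← dotProduct_mulVec, hXb]
  show 0 ≤ Sum.elim a b ⬝ᵥ _
  simp only [fromBlocks_mulVec, Sum.elim_comp_inl, Sum.elim_comp_inr, sumElim_dotProduct_sumElim,
    dotProduct_add, smul_mulVec, dotProduct_smul, one_mulVec, smul_eq_mul, hPa, hXb, hXa]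
  have hsq : (M • P *ᵥ a + X *ᵥ b) ⬝ᵥ (M • P *ᵥ a + X *ᵥ b) =
      M ^ 2 * ((P *ᵥ a) ⬝ᵥ (P *ᵥ a)) + 2 * M * ((P *ᵥ a) ⬝ᵥ (X *ᵥ b)) + (X *ᵥ b) ⬝ᵥ (X *ᵥ b) := by
    simp only [add_dotProduct, dotProduct_add, smul_dotProduct, dotProduct_smul, smul_eq_mul,
      dotProduct_comm (X *ᵥ b)]
    ring
  refine nonneg_of_mul_nonneg_right ?_ hM
  linarith [hXM b, hsq ▸ dotProduct_star_self_nonneg (M • P *ᵥ a + X *ᵥ b)]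

end Projection

theorem two_mul_dotProduct_le {n : Type*} [Fintype n] (x y : n → ℝ) :
    2 * (x ⬝ᵥ y) ≤ x ⬝ᵥ x + y ⬝ᵥ y := by
  simp only [dotProduct, Finset.mul_sum, ← Finset.sum_add_distrib]
  exact Finset.sum_le_sum fun i _ => by nlinarith [sq_nonneg (x i - y i)]

theorem sum_dotProduct_transpose_mulVec_self {ι n k : Type*} [Fintype ι] [Fintype n] [Fintype k]
    (A : Matrix n k ℝ) (w : ι → n → ℝ) :
    ∑ i, (Aᵀ *ᵥ w i) ⬝ᵥ (Aᵀ *ᵥ w i) = (Aᵀ * (∑ i, vecMulVec (w i) (w i)) * A).trace := by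
  simp only [Matrix.mul_sum, Matrix.sum_mul, trace_sum, vecMulVec_mul,
    mul_vecMulVec, trace_vecMulVec, mulVec_transpose]

section SingularValueDecomposition

variable {m n : Type*} [Fintype m] [Fintype n] [DecidableEq n] (X : Matrix m n ℝ)

noncomputable def rightSingularVector (i : n) : n → ℝ :=
  (isHermitian_conjTranspose_mul_self X).eigenvectorBasis i

noncomputable def singularValue (i : n) : ℝ :=
  √((isHermitian_conjTranspose_mul_self X).eigenvalues i)

-- When `singularValue X i = 0`, the junk value `0⁻¹ = 0` makes this `0`; then `X bᵢ = 0` as well.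
noncomputable def leftSingularVector (i : n) : m → ℝ :=
  (singularValue X i)⁻¹ • X *ᵥ rightSingularVector X i

theorem singularValue_nonneg (i : n) : 0 ≤ singularValue X i := Real.sqrt_nonneg _

theorem rightSingularVector_dotProduct (i j : n) :
    rightSingularVector X i ⬝ᵥ rightSingularVector X j = if i = j then 1 else 0 := by
  have h := (isHermitian_conjTranspose_mul_self X).eigenvectorBasis.inner_eq_ite j i
  rw [EuclideanSpace.inner_eq_star_dotProduct, star_trivial] at h
  simpa [rightSingularVector, eq_comm] using h

theorem sum_vecMulVec_rightSingularVector :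
    ∑ i, vecMulVec (rightSingularVector X i) (rightSingularVector X i) = 1 := by
  have h := Unitary.mul_star_self_of_mem (isHermitian_conjTranspose_mul_self X).eigenvectorUnitary.2
  ext j l
  simpa [mul_apply, vecMulVec_apply, sum_apply, rightSingularVector] using congr_fun₂ h j l

theorem mulVec_rightSingularVector_dotProduct (i j : n) :
    (X *ᵥ rightSingularVector X i) ⬝ᵥ (X *ᵥ rightSingularVector X j) =
      if i = j then singularValue X i ^ 2 else 0 := by
  rw [dotProduct_mulVec, ← mulVec_transpose, ← conjTranspose_eq_transpose_of_trivial,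
    mulVec_mulVec, rightSingularVector,
    (isHermitian_conjTranspose_mul_self X).mulVec_eigenvectorBasis, smul_dotProduct,
    ← rightSingularVector, rightSingularVector_dotProduct, singularValue,
    Real.sq_sqrt (eigenvalues_conjTranspose_mul_self_nonneg X i)]
  split_ifs <;> simp

theorem mulVec_rightSingularVector (i : n) :
    X *ᵥ rightSingularVector X i = singularValue X i • leftSingularVector X i := by
  by_cases hs : singularValue X i = 0
  · have h := mulVec_rightSingularVector_dotProduct X i i
    rw [if_pos rfl, hs, sq, mul_zero, dotProduct_self_eq_zero] at h
    rw [h, hs, zero_smul]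
  · rw [leftSingularVector, smul_inv_smul₀ hs]

theorem leftSingularVector_dotProduct (i j : n) :
    leftSingularVector X i ⬝ᵥ leftSingularVector X j =
      if i = j ∧ singularValue X i ≠ 0 then 1 else 0 := by
  rw [leftSingularVector, leftSingularVector, smul_dotProduct, dotProduct_smul,
    mulVec_rightSingularVector_dotProduct]
  by_cases hij : i = j
  · subst hij
    by_cases hs : singularValue X i = 0
    · simp [hs]
    · simp only [↓reduceIte, smul_eq_mul, ne_eq, hs, not_false_eq_true, and_self]
      field_simp
  · simp [hij]

theorem singularValue_mul_leftSingularVector_dotProduct_self (i : n) :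
    singularValue X i * (leftSingularVector X i ⬝ᵥ leftSingularVector X i) = singularValue X i := by
  rw [leftSingularVector_dotProduct]
  by_cases hs : singularValue X i = 0 <;> simp [hs]

theorem isIdempotentElem_sum_vecMulVec_leftSingularVector :
    IsIdempotentElem (∑ i, vecMulVec (leftSingularVector X i) (leftSingularVector X i)) := by
  refine isIdempotentElem_sum_vecMulVec (fun i j hij => ?_) (fun i => ?_)
  · simp [leftSingularVector_dotProduct, hij]
  · by_cases hs : singularValue X i = 0
    · simp [leftSingularVector, hs]
    · simp [leftSingularVector_dotProduct, hs]

theorem sum_singularValue_smul_vecMulVec :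
    ∑ i, singularValue X i • vecMulVec (leftSingularVector X i) (rightSingularVector X i) = X := by
  conv_rhs => rw [← Matrix.mul_one X, ← sum_vecMulVec_rightSingularVector X, Matrix.mul_sum]
  simp only [mul_vecMulVec, mulVec_rightSingularVector, smul_vecMulVec]

noncomputable def leftModulus : Matrix m m ℝ :=
  ∑ i, singularValue X i • vecMulVec (leftSingularVector X i) (leftSingularVector X i)

noncomputable def rightModulus : Matrix n n ℝ :=
  ∑ i, singularValue X i • vecMulVec (rightSingularVector X i) (rightSingularVector X i)

theorem transpose_leftModulus : (leftModulus X)ᵀ = leftModulus X := by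
  simp [leftModulus, transpose_sum, transpose_vecMulVec]

theorem transpose_rightModulus : (rightModulus X)ᵀ = rightModulus X := by
  simp [rightModulus, transpose_sum, transpose_vecMulVec]

theorem trace_leftModulus : (leftModulus X).trace = ∑ i, singularValue X i := by
  simp only [leftModulus, trace_sum, trace_smul, trace_vecMulVec, smul_eq_mul,
    singularValue_mul_leftSingularVector_dotProduct_self]

theorem trace_rightModulus : (rightModulus X).trace = ∑ i, singularValue X i := by
  simp [rightModulus, trace_sum, trace_vecMulVec, rightSingularVector_dotProduct]

theorem posSemidef_fromBlocks_leftModulus_rightModulus :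
    (fromBlocks (leftModulus X) X Xᵀ (rightModulus X)).PosSemidef := by
  have hblocks : fromBlocks (leftModulus X) X Xᵀ (rightModulus X) =
      ∑ i, singularValue X i •
        vecMulVec (Sum.elim (leftSingularVector X i) (rightSingularVector X i))
          (Sum.elim (leftSingularVector X i) (rightSingularVector X i)) := by
    nth_rw 2 3 [← sum_singularValue_smul_vecMulVec X]
    ext (a | a) (b | b) <;>
      simp [leftModulus, rightModulus, fromBlocks, sum_apply, vecMulVec_apply, mul_comm]
  rw [hblocks]
  refine posSemidef_sum _ fun i _ => ?_
  exact (posSemidef_vecMulVec_self_star _).smul (singularValue_nonneg X i)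

end SingularValueDecomposition

theorem sum_singularValue_mul_transpose_le {m n k : Type*} [Fintype m] [Fintype n] [Fintype k]
    [DecidableEq m] [DecidableEq n] (U : Matrix m k ℝ) (V : Matrix n k ℝ) :
    ∑ i, singularValue (U * Vᵀ) i ≤ ((Uᵀ * U).trace + (Vᵀ * V).trace) / 2 := by
  set u := leftSingularVector (U * Vᵀ)
  set b := rightSingularVector (U * Vᵀ)
  have hs : ∀ i, singularValue (U * Vᵀ) i = (Uᵀ *ᵥ u i) ⬝ᵥ (Vᵀ *ᵥ b i) := fun i => by
    rw [mulVec_transpose, ← dotProduct_mulVec, mulVec_mulVec, mulVec_rightSingularVector,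
      dotProduct_smul, smul_eq_mul, singularValue_mul_leftSingularVector_dotProduct_self]
  have hU : ∑ i, (Uᵀ *ᵥ u i) ⬝ᵥ (Uᵀ *ᵥ u i) ≤ (Uᵀ * U).trace := by
    rw [sum_dotProduct_transpose_mulVec_self]
    exact trace_transpose_mul_mul_le (by simp [transpose_sum, transpose_vecMulVec])
      (isIdempotentElem_sum_vecMulVec_leftSingularVector _) U
  have hV : ∑ i, (Vᵀ *ᵥ b i) ⬝ᵥ (Vᵀ *ᵥ b i) = (Vᵀ * V).trace := by
    rw [sum_dotProduct_transpose_mulVec_self, sum_vecMulVec_rightSingularVector, Matrix.mul_one]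
  have h2 : ∑ i, 2 * singularValue (U * Vᵀ) i ≤
      ∑ i, ((Uᵀ *ᵥ u i) ⬝ᵥ (Uᵀ *ᵥ u i) + (Vᵀ *ᵥ b i) ⬝ᵥ (Vᵀ *ᵥ b i)) :=
    Finset.sum_le_sum fun i _ => hs i ▸ two_mul_dotProduct_le _ _
  rw [← Finset.mul_sum, Finset.sum_add_distrib] at h2
  linarith

end Matrix

theorem nuclearNorm_eq_sum_singularValue {n m : ℕ} (X : Matrix (Fin n) (Fin m) ℝ) :
    nuclearNorm X = ∑ i, singularValue X i := by
  rw [nuclearNorm, trace_mul_comm, ← Matrix.mul_assoc,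
    Unitary.star_mul_self_of_mem
      (Matrix.posSemidef_conjTranspose_mul_self X).1.eigenvectorUnitary.2,
    Matrix.one_mul, trace_diagonal]
  rfl

theorem dotProduct_mulVec_self_le_matSpectralNorm_sq {n m : ℕ} (X : Matrix (Fin n) (Fin m) ℝ)
    (v : Fin m → ℝ) : (X *ᵥ v) ⬝ᵥ (X *ᵥ v) ≤ matSpectralNorm X ^ 2 * (v ⬝ᵥ v) := by
  have hnorm : ∀ {k : ℕ} (w : Fin k → ℝ), ‖WithLp.toLp 2 w‖ ^ 2 = w ⬝ᵥ w := fun w => by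
    rw [← real_inner_self_eq_norm_sq, EuclideanSpace.inner_toLp_toLp]
    rfl
  have h : ‖WithLp.toLp 2 (X *ᵥ v)‖ ≤ matSpectralNorm X * ‖WithLp.toLp 2 v‖ :=
    (LinearMap.toContinuousLinearMap (toEuclideanLin X)).le_opNorm (WithLp.toLp 2 v)
  rw [← hnorm, ← hnorm, ← mul_pow]
  exact pow_le_pow_left₀ (norm_nonneg _) h 2

theorem sdp_relaxation_feasible_general {n m k d : ℕ}
    (Ω : Finset (Fin n × Fin m))
    (A : Matrix (Fin n) (Fin m) ℝ) (Y : Matrix (Fin n) (Fin d) ℝ)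
    (lam γ M : ℝ) (hγ : 0 < γ) (hM : 0 < M)
    (U : Matrix (Fin n) (Fin k) ℝ) (V : Matrix (Fin m) (Fin k) ℝ)
    (P : Matrix (Fin n) (Fin n) ℝ)
    (hPsym : Pᵀ = P) (hPidem : P * P = P) (hPtr : P.trace ≤ (k : ℝ))
    (hPU : ((1 : Matrix (Fin n) (Fin n) ℝ) - P) * U = 0)
    (hXM : matSpectralNorm (U * Vᵀ) ≤ M)
    (X : Matrix (Fin n) (Fin m) ℝ) (hX : X = U * Vᵀ) :
    ∃ (W₁ : Matrix (Fin n) (Fin n) ℝ) (W₂ : Matrix (Fin m) (Fin m) ℝ),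
      W₁ᵀ = W₁ ∧ W₂ᵀ = W₂ ∧
      ((1 : Matrix (Fin n) (Fin n) ℝ) - P).PosSemidef ∧ P.PosSemidef ∧
      P.trace ≤ (k : ℝ) ∧
      (Matrix.fromBlocks (M • P) X Xᵀ (M • (1 : Matrix (Fin m) (Fin m) ℝ))).PosSemidef ∧
      (Matrix.fromBlocks W₁ X Xᵀ W₂).PosSemidef ∧
      (γ / 2) * (W₁.trace + W₂.trace) = γ * nuclearNorm X ∧
      γ * nuclearNorm X ≤ (γ / 2) * ((Uᵀ * U).trace + (Vᵀ * V).trace) ∧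
      (∑ p ∈ Ω, (X p.1 p.2 - A p.1 p.2) ^ 2)
          + lam * (Yᵀ * ((1 : Matrix (Fin n) (Fin n) ℝ) - P) * Y).trace
          + (γ / 2) * (W₁.trace + W₂.trace)
        ≤ (∑ p ∈ Ω, ((U * Vᵀ) p.1 p.2 - A p.1 p.2) ^ 2)
          + lam * (Yᵀ * ((1 : Matrix (Fin n) (Fin n) ℝ) - P) * Y).trace
          + (γ / 2) * ((Uᵀ * U).trace + (Vᵀ * V).trace) := by
  subst hX
  have hPX : P * (U * Vᵀ) = U * Vᵀ := by
    rw [Matrix.sub_mul, Matrix.one_mul, sub_eq_zero] at hPU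
    rw [← Matrix.mul_assoc, ← hPU]
  have hXM' (v : Fin m → ℝ) : ((U * Vᵀ) *ᵥ v) ⬝ᵥ ((U * Vᵀ) *ᵥ v) ≤ M ^ 2 * (v ⬝ᵥ v) :=
    (dotProduct_mulVec_self_le_matSpectralNorm_sq _ v).trans <|
      mul_le_mul_of_nonneg_right (pow_le_pow_left₀ (norm_nonneg _) hXM 2)
        (dotProduct_star_self_nonneg v)
  have hnuc : γ * nuclearNorm (U * Vᵀ) ≤ (γ / 2) * ((Uᵀ * U).trace + (Vᵀ * V).trace) := by
    rw [nuclearNorm_eq_sum_singularValue]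
    linarith [mul_le_mul_of_nonneg_left (sum_singularValue_mul_transpose_le U V) hγ.le]
  have htrace : (γ / 2) * ((leftModulus (U * Vᵀ)).trace + (rightModulus (U * Vᵀ)).trace) =
      γ * nuclearNorm (U * Vᵀ) := by
    rw [trace_leftModulus, trace_rightModulus, nuclearNorm_eq_sum_singularValue]
    ring
  refine ⟨leftModulus (U * Vᵀ), rightModulus (U * Vᵀ), transpose_leftModulus _,
    transpose_rightModulus _,
    posSemidef_of_transpose_eq_of_isIdempotentElem (by rw [transpose_sub, transpose_one, hPsym])
      (IsIdempotentElem.one_sub hPidem),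
    posSemidef_of_transpose_eq_of_isIdempotentElem hPsym hPidem, hPtr,
    posSemidef_fromBlocks_smul_of_mul_eq hPsym hPidem hPX hM hXM',
    posSemidef_fromBlocks_leftModulus_rightModulus _, htrace, hnuc, by linarith⟩

/-- Any feasible solution `(U, V, P)` of the mixed-projection problem yields a feasible
solution `(X, P, W₁, W₂)` of the semidefinite relaxation with no greater objective value. -/
theorem sdp_relaxation_feasible {n m k d : ℕ}
    (Ω : Finset (Fin n × Fin m))
    (A : Matrix (Fin n) (Fin m) ℝ) (Y : Matrix (Fin n) (Fin d) ℝ)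
    (lam γ M : ℝ) (hlam : 0 < lam) (hγ : 0 < γ) (hM : 0 < M)
    (U : Matrix (Fin n) (Fin k) ℝ) (V : Matrix (Fin m) (Fin k) ℝ)
    (P : Matrix (Fin n) (Fin n) ℝ)
    (hPsym : Pᵀ = P) (hPidem : P * P = P) (hPtr : P.trace ≤ (k : ℝ))
    (hPU : ((1 : Matrix (Fin n) (Fin n) ℝ) - P) * U = 0)
    (hXM : matSpectralNorm (U * Vᵀ) ≤ M)
    (X : Matrix (Fin n) (Fin m) ℝ) (hX : X = U * Vᵀ) :
    ∃ (W₁ : Matrix (Fin n) (Fin n) ℝ) (W₂ : Matrix (Fin m) (Fin m) ℝ),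
      W₁ᵀ = W₁ ∧ W₂ᵀ = W₂ ∧
      ((1 : Matrix (Fin n) (Fin n) ℝ) - P).PosSemidef ∧ P.PosSemidef ∧
      P.trace ≤ (k : ℝ) ∧
      (Matrix.fromBlocks (M • P) X Xᵀ (M • (1 : Matrix (Fin m) (Fin m) ℝ))).PosSemidef ∧
      (Matrix.fromBlocks W₁ X Xᵀ W₂).PosSemidef ∧
      (γ / 2) * (W₁.trace + W₂.trace) = γ * nuclearNorm X ∧
      γ * nuclearNorm X ≤ (γ / 2) * ((Uᵀ * U).trace + (Vᵀ * V).trace) ∧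
      (∑ p ∈ Ω, (X p.1 p.2 - A p.1 p.2) ^ 2)
          + lam * (Yᵀ * ((1 : Matrix (Fin n) (Fin n) ℝ) - P) * Y).trace
          + (γ / 2) * (W₁.trace + W₂.trace)
        ≤ (∑ p ∈ Ω, ((U * Vᵀ) p.1 p.2 - A p.1 p.2) ^ 2)
          + lam * (Yᵀ * ((1 : Matrix (Fin n) (Fin n) ℝ) - P) * Y).trace
          + (γ / 2) * ((Uᵀ * U).trace + (Vᵀ * V).trace) :=
  sdp_relaxation_feasible_general Ω A Y lam γ M hγ hM U V P hPsym hPidem hPtr hPU hXM X hX
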